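/- arXiv:2204.08130 — 3 statements merged into one kernel-verified Lean document; each statement's English description precedes it below -/
import Mathlib

section
/- Let n ∈ ℤ, ξ, η ∈ ℝ², m' ∈ ℤ, and define Λ_k(ζ) = √(1 + |ζ|² + k²) for k ∈ ℤ, ζ ∈ ℝ². Set a = |ξ|² + n², b = |ξ−η|² + (n−m')², c = |η|² + m'². Then for any choice of signs, 1/|Λ_n(ξ) ± Λ_{n−m'}(ξ−η) ± Λ_{m'}(η)| ≤ 2√(1 + min(a, b, c)) (whenever the denominator is nonzero). -/
noncomputable section

/-- The Klein–Gordon dispersion relation `Λ_k(ζ) = √(1 + |ζ|² + k²)` on `ℝ² × 𝕋`. -/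
def KGweight (k : ℤ) (ζ : EuclideanSpace ℝ (Fin 2)) : ℝ :=
  Real.sqrt (1 + ‖ζ‖ ^ 2 + (k : ℝ) ^ 2)

/-!
Write `⟨x⟩ = √(1 + ‖x‖²)`, so that `Λ_k(ζ) = ⟨(ζ, k)⟩` in `ℝ² × ℝ` with the `L²` norm, and the
three frequencies satisfy `(ξ, n) = (ξ - η, n - m') + (η, m')`. Up to an overall sign and a
relabelling `y ↦ -y`, every denominator with a minus sign is the triangle defect
`⟨x⟩ + ⟨y⟩ - ⟨x + y⟩` of two vectors. Since `⟨·⟩` is `1`-Lipschitz, this defect is at least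
`⟨x⟩ - ‖x‖ = 1 / (⟨x⟩ + ‖x‖) ≥ 1 / (2⟨x⟩)`, and likewise with `y`; when `⟨x + y⟩` is the smallest
bracket, the defect is even at least `⟨y⟩ ≥ 1`.
-/

section JapaneseBracket

variable {E : Type*} [SeminormedAddCommGroup E]

def japaneseBracket (x : E) : ℝ := √(1 + ‖x‖ ^ 2)

theorem sq_japaneseBracket (x : E) : japaneseBracket x ^ 2 = 1 + ‖x‖ ^ 2 :=
  Real.sq_sqrt (by positivity)

theorem one_le_japaneseBracket (x : E) : 1 ≤ japaneseBracket x :=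
  Real.one_le_sqrt.mpr (by nlinarith [norm_nonneg x])

theorem norm_le_japaneseBracket (x : E) : ‖x‖ ≤ japaneseBracket x :=
  Real.le_sqrt_of_sq_le (by linarith)

@[simp]
theorem japaneseBracket_neg (x : E) : japaneseBracket (-x) = japaneseBracket x := by
  simp [japaneseBracket]

theorem japaneseBracket_add_le (x y : E) :
    japaneseBracket (x + y) ≤ ‖x‖ + japaneseBracket y := by
  have := norm_le_japaneseBracket y
  refine Real.sqrt_le_iff.mpr ⟨by linarith [norm_nonneg x, norm_nonneg y], ?_⟩
  nlinarith [norm_add_le x y, norm_nonneg x, norm_nonneg (x + y), sq_japaneseBracket y]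

theorem inv_two_mul_le_japaneseBracket_sub_norm (x : E) :
    (2 * japaneseBracket x)⁻¹ ≤ japaneseBracket x - ‖x‖ := by
  have h1 := one_le_japaneseBracket x
  have hx := norm_le_japaneseBracket x
  rw [inv_le_iff_one_le_mul₀ (by positivity)]
  nlinarith [sq_japaneseBracket x]

theorem inv_two_mul_min_le_japaneseBracket_defect (x y : E) :
    (2 * min (japaneseBracket x) (min (japaneseBracket y) (japaneseBracket (x + y))))⁻¹ ≤
      japaneseBracket x + japaneseBracket y - japaneseBracket (x + y) := by
  have hxy := japaneseBracket_add_le x y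
  have hyx := add_comm y x ▸ japaneseBracket_add_le y x
  have hmin_le :=
    min_le_left (japaneseBracket x) (min (japaneseBracket y) (japaneseBracket (x + y)))
  rcases min_choice (japaneseBracket x) (min (japaneseBracket y) (japaneseBracket (x + y)))
    with hm | hm <;> rw [hm] at hmin_le ⊢
  · linarith [inv_two_mul_le_japaneseBracket_sub_norm x]
  rcases min_choice (japaneseBracket y) (japaneseBracket (x + y)) with hm' | hm' <;>
    rw [hm'] at hmin_le ⊢
  · linarith [inv_two_mul_le_japaneseBracket_sub_norm y]
  · have : (2 * japaneseBracket (x + y))⁻¹ ≤ 1 :=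
      inv_le_one_of_one_le₀ (by linarith [one_le_japaneseBracket (x + y)])
    linarith [one_le_japaneseBracket y]

theorem inv_two_mul_min_le_abs_japaneseBracket_add_signed (y z : E) {s₁ s₂ : ℝ}
    (hs₁ : s₁ = 1 ∨ s₁ = -1) (hs₂ : s₂ = 1 ∨ s₂ = -1) :
    (2 * min (japaneseBracket (y + z)) (min (japaneseBracket y) (japaneseBracket z)))⁻¹ ≤
      |japaneseBracket (y + z) + s₁ * japaneseBracket y + s₂ * japaneseBracket z| := by
  rcases hs₁ with rfl | rfl <;> rcases hs₂ with rfl | rfl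
  · have hm : 1 ≤ min (japaneseBracket (y + z)) (min (japaneseBracket y) (japaneseBracket z)) :=
      le_min (one_le_japaneseBracket _) <|
        le_min (one_le_japaneseBracket _) (one_le_japaneseBracket _)
    have := one_le_japaneseBracket (y + z)
    have := one_le_japaneseBracket y
    have := one_le_japaneseBracket z
    exact (inv_le_one_of_one_le₀ (by linarith)).trans (le_abs.mpr (Or.inl (by linarith)))
  · have h := inv_two_mul_min_le_japaneseBracket_defect (y + z) (-y)
    rw [japaneseBracket_neg, show y + z + -y = z by abel] at h
    exact h.trans (le_abs.mpr (Or.inl (by linarith)))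
  · have h := inv_two_mul_min_le_japaneseBracket_defect (y + z) (-z)
    rw [japaneseBracket_neg, show y + z + -z = y by abel, min_comm (japaneseBracket z)] at h
    exact h.trans (le_abs.mpr (Or.inl (by linarith)))
  · have h := inv_two_mul_min_le_japaneseBracket_defect y z
    rw [← min_assoc, min_comm] at h
    exact h.trans (le_abs.mpr (Or.inr (by linarith)))

end JapaneseBracket

theorem KGweight_eq_japaneseBracket (k : ℤ) (ζ : EuclideanSpace ℝ (Fin 2)) :
    KGweight k ζ = japaneseBracket (WithLp.toLp 2 (ζ, (k : ℝ))) := by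
  rw [KGweight, japaneseBracket, WithLp.prod_norm_sq_eq_of_L2, Real.norm_eq_abs, sq_abs, add_assoc]
  rfl

theorem sqrt_one_add_min_eq_min_KGweight (n m' : ℤ) (ξ η : EuclideanSpace ℝ (Fin 2)) :
    Real.sqrt (1 + min (‖ξ‖ ^ 2 + (n : ℝ) ^ 2)
        (min (‖ξ - η‖ ^ 2 + ((n : ℝ) - (m' : ℝ)) ^ 2) (‖η‖ ^ 2 + (m' : ℝ) ^ 2))) =
      min (KGweight n ξ) (min (KGweight (n - m') (ξ - η)) (KGweight m' η)) := by
  have hmono : Monotone fun t : ℝ => Real.sqrt (1 + t) :=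
    fun _ _ h => Real.sqrt_le_sqrt (add_le_add_right h 1)
  simp only [hmono.map_min, KGweight, add_assoc, Int.cast_sub]

theorem small_denominator_bound_general (n m' : ℤ) (ξ η : EuclideanSpace ℝ (Fin 2))
    (s₁ s₂ : ℝ) (hs₁ : s₁ = 1 ∨ s₁ = -1) (hs₂ : s₂ = 1 ∨ s₂ = -1) :
    1 / |KGweight n ξ + s₁ * KGweight (n - m') (ξ - η) + s₂ * KGweight m' η| ≤
      2 * Real.sqrt (1 + min (‖ξ‖ ^ 2 + (n : ℝ) ^ 2)
        (min (‖ξ - η‖ ^ 2 + ((n : ℝ) - (m' : ℝ)) ^ 2) (‖η‖ ^ 2 + (m' : ℝ) ^ 2))) := by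
  have hsum : WithLp.toLp 2 (ξ - η, ((n - m' : ℤ) : ℝ)) + WithLp.toLp 2 (η, (m' : ℝ)) =
      WithLp.toLp 2 (ξ, (n : ℝ)) := by
    rw [← WithLp.toLp_add, Prod.mk_add_mk, sub_add_cancel, Int.cast_sub, sub_add_cancel]
  have key := inv_two_mul_min_le_abs_japaneseBracket_add_signed
    (WithLp.toLp 2 (ξ - η, ((n - m' : ℤ) : ℝ))) (WithLp.toLp 2 (η, (m' : ℝ))) hs₁ hs₂
  rw [hsum, ← KGweight_eq_japaneseBracket, ← KGweight_eq_japaneseBracket,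
    ← KGweight_eq_japaneseBracket, ← sqrt_one_add_min_eq_min_KGweight] at key
  rw [one_div]
  exact inv_le_of_inv_le₀ (by positivity) key

/-- Small-denominator bound: for any signs `s₁, s₂ ∈ {+1, −1}`,
`1/|Λ_n(ξ) ± Λ_{n−m'}(ξ−η) ± Λ_{m'}(η)| ≤ 2√(1 + min(a,b,c))` with
`a = |ξ|² + n²`, `b = |ξ−η|² + (n−m')²`, `c = |η|² + m'²`. -/
theorem small_denominator_bound (n m' : ℤ) (ξ η : EuclideanSpace ℝ (Fin 2))
    (s₁ s₂ : ℝ) (hs₁ : s₁ = 1 ∨ s₁ = -1) (hs₂ : s₂ = 1 ∨ s₂ = -1)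
    (hden : KGweight n ξ + s₁ * KGweight (n - m') (ξ - η) + s₂ * KGweight m' η ≠ 0) :
    1 / |KGweight n ξ + s₁ * KGweight (n - m') (ξ - η) + s₂ * KGweight m' η| ≤
      2 * Real.sqrt (1 + min (‖ξ‖ ^ 2 + (n : ℝ) ^ 2)
        (min (‖ξ - η‖ ^ 2 + ((n : ℝ) - (m' : ℝ)) ^ 2) (‖η‖ ^ 2 + (m' : ℝ) ^ 2))) :=
  small_denominator_bound_general n m' ξ η s₁ s₂ hs₁ hs₂
end
end

section
/- Let λ ≥ 1, n ∈ ℤ, t > 0, x ∈ ℝ², and define φ(ξ) = (1/λ)√(1 + |λξ|² + n²) + (x·ξ)/t for ξ ∈ ℝ². If t ≥ 100|x|(λ + |n|)/λ, then for every ξ ∈ ℝ² with 5/8 ≤ |ξ| ≤ 8/5 one has |∇φ(ξ)| ≥ (1/24) · λ/(λ + |n|). -/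
/-!
The gradient of `φ` is `(λ / F) ξ + x / t` with `F = √(1 + |λξ|² + n²) ≤ 6(λ + |n|)` on the
annulus. Its first term therefore has length at least `(5/8) λ / (6(λ + |n|))`, while the time
condition makes `|x| / t ≤ λ / (100(λ + |n|))`; since `5/48 - 1/100 ≥ 1/24`, the reverse triangle
inequality gives the bound.
-/

open scoped RealInnerProductSpace

theorem hasFDerivAt_kleinGordonPhase {E : Type*} [NormedAddCommGroup E] [InnerProductSpace ℝ E]
    {lam : ℝ} (hlam : lam ≠ 0) (m t : ℝ) (x ξ : E) :
    HasFDerivAt (fun ζ : E => (1 / lam) * √(1 + (lam * ‖ζ‖) ^ 2 + m ^ 2) + ⟪x, ζ⟫ / t)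
      (innerSL ℝ ((lam / √(1 + (lam * ‖ξ‖) ^ 2 + m ^ 2)) • ξ + t⁻¹ • x)) ξ := by
  have hpos : 0 < 1 + (lam * ‖ξ‖) ^ 2 + m ^ 2 := by positivity
  have hsq : HasFDerivAt (fun ζ : E => 1 + (lam * ‖ζ‖) ^ 2 + m ^ 2)
      (lam ^ 2 • (2 • innerSL ℝ ξ)) ξ := by
    simp_rw [mul_pow]
    exact (((hasStrictFDerivAt_norm_sq ξ).hasFDerivAt.const_smul (lam ^ 2)).const_add 1).add_const _
  have hlin : HasFDerivAt (fun ζ : E => ⟪x, ζ⟫ / t) (t⁻¹ • innerSL ℝ x) ξ := by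
    simpa [div_eq_inv_mul] using ((innerSL ℝ x).hasFDerivAt (x := ξ)).const_mul t⁻¹
  refine (((hsq.sqrt hpos.ne').const_smul (1 / lam)).add hlin).congr_fderiv ?_
  ext w
  simp only [add_apply, smul_apply, coe_innerSL_apply, nsmul_eq_mul, Nat.cast_ofNat, smul_eq_mul,
    map_add, map_smul]
  field_simp

theorem sqrt_one_add_sq_mul_add_sq_le {lam r : ℝ} (hlam : 1 ≤ lam) (hr : |r| ≤ 8 / 5) (m : ℝ) :
    √(1 + (lam * r) ^ 2 + m ^ 2) ≤ 6 * (lam + |m|) := by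
  have hr2 : r ^ 2 ≤ (8 / 5) ^ 2 := sq_le_sq' (abs_le.1 hr).1 (abs_le.1 hr).2
  rw [Real.sqrt_le_left (by positivity)]
  nlinarith [sq_abs m, abs_nonneg m, mul_le_mul_of_nonneg_left hr2 (sq_nonneg lam)]

/-- Non-stationary-phase gradient lower bound, Case 4 (time dominates):
with `φ(ξ) = (1/λ)√(1 + |λξ|² + n²) + (x·ξ)/t`, if `t ≥ 100|x|(λ+|n|)/λ` then
`|∇φ(ξ)| ≥ (1/24) λ/(λ+|n|)` on the annulus `5/8 ≤ |ξ| ≤ 8/5`. -/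
theorem nonstationary_phase_lower_bound_time_dominant
    (lam : ℝ) (hlam : 1 ≤ lam) (n : ℤ) (t : ℝ) (ht : 0 < t)
    (x : EuclideanSpace ℝ (Fin 2))
    (hT : 100 * ‖x‖ * (lam + |(n : ℝ)|) / lam ≤ t)
    (ξ : EuclideanSpace ℝ (Fin 2)) (h1 : 5 / 8 ≤ ‖ξ‖) (h2 : ‖ξ‖ ≤ 8 / 5) :
    (1 / 24) * (lam / (lam + |(n : ℝ)|)) ≤
      ‖fderiv ℝ (fun ζ : EuclideanSpace ℝ (Fin 2) =>
          (1 / lam) * Real.sqrt (1 + (lam * ‖ζ‖) ^ 2 + (n : ℝ) ^ 2)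
            + (inner ℝ x ζ : ℝ) / t) ξ‖ := by
  have hlam0 : 0 < lam := by linarith
  set A := lam + |(n : ℝ)|
  have hA : 0 < A := by positivity
  set F := √(1 + (lam * ‖ξ‖) ^ 2 + (n : ℝ) ^ 2)
  have hF : 0 < F := by positivity
  have hF6 : F ≤ 6 * A :=
    sqrt_one_add_sq_mul_add_sq_le hlam (by rwa [abs_norm]) _
  have hxt : ‖x‖ / t ≤ lam / (100 * A) := by
    rw [div_le_div_iff₀ ht (by positivity)]
    nlinarith [(div_le_iff₀ hlam0).1 hT]
  rw [(hasFDerivAt_kleinGordonPhase hlam0.ne' _ t x ξ).fderiv, innerSL_apply_norm]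
  calc (1 / 24) * (lam / A) ≤ lam / (6 * A) * (5 / 8) - lam / (100 * A) := by
        field_simp; linarith
    _ ≤ lam / F * ‖ξ‖ - ‖x‖ / t := by gcongr
    _ = ‖(lam / F) • ξ‖ - ‖-(t⁻¹ • x)‖ := by
        rw [norm_neg, norm_smul, norm_smul, Real.norm_of_nonneg (by positivity),
          Real.norm_of_nonneg (by positivity), inv_mul_eq_div]
    _ ≤ ‖(lam / F) • ξ + t⁻¹ • x‖ := by
        simpa using norm_sub_norm_le ((lam / F) • ξ) (-(t⁻¹ • x))
end

section
/- Let λ ≥ 1, n ∈ ℤ, t > 0, x ∈ ℝ², and define φ(ξ) = (1/λ)√(1 + |λξ|² + n²) + (x·ξ)/t for ξ ∈ ℝ². If t ≤ |x|(λ + |n|)/(100λ), then for every ξ ∈ ℝ² with 5/8 ≤ |ξ| ≤ 8/5 one has |∇φ(ξ)| ≥ λ/(λ + |n|). -/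
/-! The gradient of the phase at `ξ` is `(λ/r) ξ + x/t` with `r = √(1 + n² + λ²|ξ|²)`.
For `|ξ| ≤ 8/5` one has `|ξ| (λ + |n|) ≤ 3r`, so the dispersive part has length at most
`3λ/(λ + |n|)`, while the hypothesis on `t` gives `|x|/t ≥ 100λ/(λ + |n|)`; the reverse
triangle inequality leaves at least `λ/(λ + |n|)`. -/

noncomputable section

open Real

section Phase

variable {E : Type*} [NormedAddCommGroup E] [InnerProductSpace ℝ E]

theorem hasFDerivAt_sqrt_add_mul_norm_sq {c : ℝ} (hc : 0 < c) (a : ℝ) (ξ : E) :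
    HasFDerivAt (fun ζ : E => √(c + (a * ‖ζ‖) ^ 2))
      (innerSL ℝ ((a ^ 2 / √(c + (a * ‖ξ‖) ^ 2)) • ξ)) ξ := by
  have hpos : 0 < c + (a * ‖ξ‖) ^ 2 := by positivity
  have hsq : HasFDerivAt (fun ζ : E => c + (a * ‖ζ‖) ^ 2) (a ^ 2 • (2 • innerSL ℝ ξ)) ξ := by
    have hnorm : HasFDerivAt (fun ζ : E => ‖ζ‖ ^ 2) (2 • innerSL ℝ ξ) ξ := by
      simpa using (hasFDerivAt_id ξ).norm_sq
    simpa only [mul_pow, smul_eq_mul] using (hnorm.const_mul (a ^ 2)).const_add c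
  refine ((hasDerivAt_sqrt hpos.ne').comp_hasFDerivAt ξ hsq).congr_fderiv ?_
  ext v
  simp only [smul_apply, innerSL_apply_apply, real_inner_smul_left,
    smul_eq_mul, nsmul_eq_mul]
  field_simp
  ring

theorem hasFDerivAt_sqrt_phase {lam c : ℝ} (hlam : lam ≠ 0) (hc : 0 < c) (x : E) (t : ℝ)
    (ξ : E) :
    HasFDerivAt (fun ζ : E => (1 / lam) * √(c + (lam * ‖ζ‖) ^ 2) + inner ℝ x ζ / t)
      (innerSL ℝ ((lam / √(c + (lam * ‖ξ‖) ^ 2)) • ξ + t⁻¹ • x)) ξ := by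
  have hlin : HasFDerivAt (fun ζ : E => inner ℝ x ζ / t) (t⁻¹ • innerSL ℝ x) ξ := by
    simpa [div_eq_inv_mul] using ((innerSL ℝ x).hasFDerivAt (x := ξ)).const_mul t⁻¹
  refine (((hasFDerivAt_sqrt_add_mul_norm_sq hc lam ξ).const_mul (1 / lam)).add
    hlin).congr_fderiv ?_
  ext v
  simp only [add_apply, smul_apply, innerSL_apply_apply,
    inner_add_left, real_inner_smul_left, smul_eq_mul]
  field_simp

end Phase

theorem mul_add_abs_le_three_mul_sqrt {a s : ℝ} (ha : 0 ≤ a) (hs : 0 ≤ s) (hs' : s ≤ 8 / 5)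
    (m : ℝ) : s * (a + |m|) ≤ 3 * √(1 + m ^ 2 + (a * s) ^ 2) := by
  rw [← sqrt_sq (by positivity : 0 ≤ s * (a + |m|)), ← sqrt_sq (by norm_num : (0 : ℝ) ≤ 3),
    ← sqrt_mul (by norm_num)]
  gcongr
  -- `(a + |m|)² ≤ 2 (a² + m²)` and `(8/5)² · 2 ≤ 9`
  nlinarith [sq_nonneg (a * s - s * |m|), sq_abs m, abs_nonneg m,
    mul_le_mul hs' hs' hs (by norm_num), sq_nonneg m]

theorem norm_smul_div_sqrt_le {E : Type*} [NormedAddCommGroup E] [NormedSpace ℝ E]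
    {lam : ℝ} (hlam : 0 < lam) (m : ℝ) {ξ : E} (hξ : ‖ξ‖ ≤ 8 / 5) :
    ‖(lam / √(1 + m ^ 2 + (lam * ‖ξ‖) ^ 2)) • ξ‖ ≤ 3 * lam / (lam + |m|) := by
  have hr : 0 < √(1 + m ^ 2 + (lam * ‖ξ‖) ^ 2) := sqrt_pos.2 (by positivity)
  rw [norm_smul, norm_of_nonneg (by positivity), div_mul_eq_mul_div,
    div_le_div_iff₀ hr (by positivity)]
  nlinarith [mul_add_abs_le_three_mul_sqrt hlam.le (norm_nonneg ξ) hξ m]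

theorem nonstationary_phase_lower_bound_space_dominant_general
    (lam : ℝ) (hlam : 1 ≤ lam) (n : ℤ) (t : ℝ) (ht : 0 < t)
    (x : EuclideanSpace ℝ (Fin 2))
    (hT : t ≤ ‖x‖ * (lam + |(n : ℝ)|) / (100 * lam))
    (ξ : EuclideanSpace ℝ (Fin 2)) (h2 : ‖ξ‖ ≤ 8 / 5) :
    lam / (lam + |(n : ℝ)|) ≤
      ‖fderiv ℝ (fun ζ : EuclideanSpace ℝ (Fin 2) =>
          (1 / lam) * Real.sqrt (1 + (lam * ‖ζ‖) ^ 2 + (n : ℝ) ^ 2)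
            + (inner ℝ x ζ : ℝ) / t) ξ‖ := by
  have hlam0 : 0 < lam := one_pos.trans_le hlam
  have hd : 0 < lam + |(n : ℝ)| := by positivity
  simp_rw [add_right_comm (1 : ℝ) _ ((n : ℝ) ^ 2)]
  rw [(hasFDerivAt_sqrt_phase hlam0.ne' (by positivity) x t ξ).fderiv, innerSL_apply_norm]
  have hspace : 100 * lam / (lam + |(n : ℝ)|) ≤ ‖t⁻¹ • x‖ := by
    rw [norm_smul, norm_inv, norm_of_nonneg ht.le, inv_mul_eq_div,
      div_le_div_iff₀ hd ht]
    rw [le_div_iff₀ (by positivity)] at hT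
    linarith
  calc lam / (lam + |(n : ℝ)|)
      ≤ 100 * lam / (lam + |(n : ℝ)|) - 3 * lam / (lam + |(n : ℝ)|) := by
        rw [← sub_div]; gcongr; linarith
    _ ≤ ‖t⁻¹ • x‖ - ‖(lam / √(1 + (n : ℝ) ^ 2 + (lam * ‖ξ‖) ^ 2)) • ξ‖ := by
        gcongr; exact norm_smul_div_sqrt_le hlam0 _ h2
    _ ≤ _ := by rw [add_comm (_ • ξ)]; exact norm_sub_le_norm_add _ _

/-- Non-stationary-phase gradient lower bound (spatial side dominates):
with `φ(ξ) = (1/λ)√(1 + |λξ|² + n²) + (x·ξ)/t`, if `t ≤ |x|(λ+|n|)/(100λ)` then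
`|∇φ(ξ)| ≥ λ/(λ+|n|)` on the annulus `5/8 ≤ |ξ| ≤ 8/5`. -/
theorem nonstationary_phase_lower_bound_space_dominant
    (lam : ℝ) (hlam : 1 ≤ lam) (n : ℤ) (t : ℝ) (ht : 0 < t)
    (x : EuclideanSpace ℝ (Fin 2))
    (hT : t ≤ ‖x‖ * (lam + |(n : ℝ)|) / (100 * lam))
    (ξ : EuclideanSpace ℝ (Fin 2)) (h1 : 5 / 8 ≤ ‖ξ‖) (h2 : ‖ξ‖ ≤ 8 / 5) :
    lam / (lam + |(n : ℝ)|) ≤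
      ‖fderiv ℝ (fun ζ : EuclideanSpace ℝ (Fin 2) =>
          (1 / lam) * Real.sqrt (1 + (lam * ‖ζ‖) ^ 2 + (n : ℝ) ^ 2)
            + (inner ℝ x ζ : ℝ) / t) ξ‖ :=
  nonstationary_phase_lower_bound_space_dominant_general lam hlam n t ht x hT ξ h2
end
end
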